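/- arXiv:1612.05768 — 6 statements merged into one kernel-verified Lean document; each statement's English description precedes it below -/
import Mathlib

section
/- The column braiding σ_C is idempotent: σ_C ∘ σ_C = σ_C on Col_A × Col_A. -/
variable {α : Type*} [LinearOrder α]

/-- Schensted insertion of a letter into a single row:
returns the new row and the bumped letter, if any. -/
def rowInsert : List α → α → List α × Option α
  | [], x => ([x], none)
  | y :: r, x =>
    if y ≤ x then
      let p := rowInsert r x
      (y :: p.1, p.2)
    else (x :: r, some y)

/-- Schensted insertion of a letter into a tableau, whose rows are listed
from bottom to top. -/
def tabInsert : List (List α) → α → List (List α)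
  | [], x => [[x]]
  | r :: t, x =>
    match rowInsert r x with
    | (r', none) => r' :: t
    | (r', some y) => r' :: tabInsert t y

/-- Iterated Schensted insertion of a word. -/
def insertWord (t : List (List α)) (w : List α) : List (List α) :=
  w.foldl tabInsert t

/-- Row reading of a tableau: the rows, read from top to bottom. -/
def rowRead (t : List (List α)) : List α := t.reverse.flatten

/-- The tableau associated to a word by the Schensted algorithm. -/
def toTableau (w : List α) : List (List α) := insertWord [] w

/-- The Schensted (plactic) product of two tableaux. -/
def tabProd (t t' : List (List α)) : List (List α) := insertWord t (rowRead t')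

/-- The row order: `u ≻_R l` iff `u` is at most as long as `l` and dominates
it entrywise strictly. -/
def RowDom (u l : List α) : Prop :=
  u.length ≤ l.length ∧
    ∀ i (hu : i < u.length) (hl : i < l.length), l.get ⟨i, hl⟩ < u.get ⟨i, hu⟩

/-- A Young tableau: a bottom-to-top list of nonempty nondecreasing rows,
each row strictly dominating the one below it. -/
def IsTableau (t : List (List α)) : Prop :=
  (∀ r ∈ t, r ≠ [] ∧ r.Pairwise (· ≤ ·)) ∧ List.Chain' (fun low up => RowDom up low) t

/-- A row: a nondecreasing word. -/
def IsRow (r : List α) : Prop := r.Pairwise (· ≤ ·)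

/-- A column: a strictly decreasing word. -/
def IsCol (c : List α) : Prop := c.Pairwise (· > ·)

/-- Number of columns of a tableau: the length of its bottom row. -/
def cols (t : List (List α)) : ℕ := (t.headD []).length

/-- The one-column tableau associated to a column, read from top to bottom. -/
def colTab (c : List α) : List (List α) := c.reverse.map (fun x => [x])

/-- The `j`-th column of a tableau, read from top to bottom. -/
def colOf (t : List (List α)) (j : ℕ) : List α := t.reverse.filterMap (fun r => r[j]?)

/-- The column braiding: `σ_C (c₁, c₂)` consists of the two columns of the
tableau `c₁ * c₂` (the second one being empty if `c₁ * c₂` is a single column,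
in which case the first one is the concatenated column `c₁c₂`). -/
def sigmaC (c1 c2 : List α) : List α × List α :=
  (colOf (tabProd (colTab c1) (colTab c2)) 0, colOf (tabProd (colTab c1) (colTab c2)) 1)

/-- The (zero- or) one-row tableau associated to a row. -/
def rowTab (r : List α) : List (List α) := if r = [] then [] else [r]

/-- The row braiding: `σ_R (r₁, r₂)` is the pair (top row, bottom row) of the
tableau `r₁ * r₂`, the top row being empty if `r₁ * r₂` is a single row
(which is then the concatenation `r₁r₂`). -/
def sigmaR (r1 r2 : List α) : List α × List α :=
  ((tabProd (rowTab r1) (rowTab r2)).getD 1 [], (tabProd (rowTab r1) (rowTab r2)).getD 0 [])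

/-- The left map `σ × Id` of the Yang–Baxter equation. -/
def map12 {X : Type*} (f : X → X → X × X) : X × X × X → X × X × X :=
  fun p => ((f p.1 p.2.1).1, (f p.1 p.2.1).2, p.2.2)

/-- The right map `Id × σ` of the Yang–Baxter equation. -/
def map23 {X : Type*} (f : X → X → X × X) : X × X × X → X × X × X :=
  fun p => (p.1, f p.2.1 p.2.2)

/-!
The tableau `c₁ * c₂` has at most two columns. Record it by its bottom-to-top rows: pairs
`[aᵢ, bᵢ]` with `aᵢ ≤ bᵢ`, then single boxes `cs`; its columns, read upwards, are `as ++ cs` and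
`bs`. Inserting the letters of the column `c₂` one by one preserves this shape, because each new
letter is smaller than the whole current second column. Conversely, inserting the second column
`bs`, top letter first, into the one-column tableau `as ++ cs` rebuilds the same tableau: each new
letter enters the bottom row and pushes the part of `bs` already placed one row up. So `σ_C` maps
the two columns of `c₁ * c₂` to themselves.
-/

namespace Plactic

theorem tabInsert_singleton_cons_of_le (t : List (List α)) {c v : α} (h : c ≤ v) :
    tabInsert ([c] :: t) v = [c, v] :: t := by
  simp [tabInsert, rowInsert, h]

theorem tabInsert_singleton_cons_of_lt (t : List (List α)) {c v : α} (h : v < c) :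
    tabInsert ([c] :: t) v = [v] :: tabInsert t c := by
  simp [tabInsert, rowInsert, not_le.mpr h]

theorem tabInsert_pair_cons_of_lt (t : List (List α)) {a b v : α} (h : v < a) :
    tabInsert ([a, b] :: t) v = [v, b] :: tabInsert t a := by
  simp [tabInsert, rowInsert, not_le.mpr h]

theorem tabInsert_pair_cons_of_le_of_lt (t : List (List α)) {a b v : α} (ha : a ≤ v)
    (hb : v < b) : tabInsert ([a, b] :: t) v = [a, v] :: tabInsert t b := by
  simp [tabInsert, rowInsert, ha, not_le.mpr hb]

/-- The tableau with first column `as ++ cs` and second column `bs`, both read upwards. -/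
def twoColumn {α : Type*} (as bs cs : List α) : List (List α) :=
  List.zipWith (fun a b => [a, b]) as bs ++ cs.map fun x => [x]

@[simp]
theorem twoColumn_nil_nil {α : Type*} (cs : List α) :
    twoColumn [] [] cs = cs.map fun x => [x] := rfl

@[simp]
theorem twoColumn_cons_cons {α : Type*} (a b : α) (as bs cs : List α) :
    twoColumn (a :: as) (b :: bs) cs = [a, b] :: twoColumn as bs cs := rfl

/-- `twoColumn as bs cs` is a semistandard tableau. -/
structure IsTwoColumn (as bs cs : List α) : Prop where
  rows_le : List.Forall₂ (· ≤ ·) as bs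
  first_lt : (as ++ cs).Pairwise (· < ·)
  second_lt : bs.Pairwise (· < ·)

theorem colOf_twoColumn_zero {α : Type*} {as bs : List α} (cs : List α)
    (h : as.length = bs.length) : colOf (twoColumn as bs cs) 0 = (as ++ cs).reverse := by
  rw [colOf, List.filterMap_reverse]
  congr 1
  induction as generalizing bs with
  | nil => cases bs <;> simp_all [twoColumn]
  | cons a as ih => cases bs <;> simp_all

theorem colOf_twoColumn_one {α : Type*} {as bs : List α} (cs : List α)
    (h : as.length = bs.length) : colOf (twoColumn as bs cs) 1 = bs.reverse := by
  rw [colOf, List.filterMap_reverse]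
  congr 1
  induction as generalizing bs with
  | nil => cases bs <;> simp_all [twoColumn]
  | cons a as ih => cases bs <;> simp_all

theorem tabProd_colTab (c c' : List α) :
    tabProd (colTab c) (colTab c') = insertWord (c.reverse.map fun x => [x]) c' := by
  simp [tabProd, rowRead, colTab, ← List.flatMap_def]

theorem sigmaC_eq_of_tabProd_eq {c₁ c₂ as bs cs : List α}
    (hT : tabProd (colTab c₁) (colTab c₂) = twoColumn as bs cs) (h : as.length = bs.length) :
    sigmaC c₁ c₂ = ((as ++ cs).reverse, bs.reverse) := by
  rw [sigmaC, hT, colOf_twoColumn_zero cs h, colOf_twoColumn_one cs h]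

theorem tabInsert_singletons_of_lt :
    ∀ {cs : List α} {v : α}, (v :: cs).Pairwise (· < ·) →
      tabInsert (cs.map fun x => [x]) v = (v :: cs).map fun x => [x]
  | [], _, _ => rfl
  | _ :: _, _, h => by
    rw [List.map_cons, tabInsert_singleton_cons_of_lt _ (List.rel_of_pairwise_cons h
      List.mem_cons_self), tabInsert_singletons_of_lt (List.pairwise_cons.mp h).2]
    rfl

theorem tabInsert_twoColumn_of_lt :
    ∀ {as bs : List α} (cs : List α) {v : α}, List.Forall₂ (· ≤ ·) as bs →
      bs.Pairwise (· ≤ ·) → (v :: (as ++ cs)).Pairwise (· < ·) → (∀ y ∈ bs, v ≤ y) →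
      ∃ as' cs', tabInsert (twoColumn as bs cs) v = twoColumn as' bs cs' ∧
        as' ++ cs' = v :: (as ++ cs) ∧ List.Forall₂ (· ≤ ·) as' bs
  | [], [], cs, _, _, _, hv, _ => ⟨[], _ :: cs, tabInsert_singletons_of_lt hv, rfl, .nil⟩
  | _ :: _, b :: _, cs, _, .cons hab hf, hb, hv, hvb => by
    obtain ⟨as', cs', hins, heq, hf'⟩ :=
      tabInsert_twoColumn_of_lt cs hf (List.pairwise_cons.mp hb).2 (List.pairwise_cons.mp hv).2
        fun y hy => hab.trans (List.rel_of_pairwise_cons hb hy)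
    refine ⟨_ :: as', cs', ?_, by simp [heq], .cons (hvb b List.mem_cons_self) hf'⟩
    rw [twoColumn_cons_cons, tabInsert_pair_cons_of_lt _ (List.rel_of_pairwise_cons hv
      List.mem_cons_self), hins, twoColumn_cons_cons]

theorem tabInsert_twoColumn_append_singleton :
    ∀ {as bs : List α} {x : α} (xs : List α) {v : α},
      List.Forall₂ (· ≤ ·) (as ++ [x]) (v :: bs) → (v :: bs).Pairwise (· < ·) →
      tabInsert (twoColumn as bs (x :: xs)) v = twoColumn (as ++ [x]) (v :: bs) xs
  | [], [], _, _, _, .cons hxv .nil, _ => tabInsert_singleton_cons_of_le _ hxv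
  | _ :: _, _ :: _, _, xs, _, .cons hav hf, hp => by
    rw [twoColumn_cons_cons, tabInsert_pair_cons_of_le_of_lt _ hav (List.rel_of_pairwise_cons hp
      List.mem_cons_self), tabInsert_twoColumn_append_singleton xs hf (List.pairwise_cons.mp hp).2]
    rfl
  | _ :: _, [], _, _, _, hf, _ => by simpa using hf.length_eq

theorem forall₂_of_append_singleton :
    ∀ {as bs : List α} {x b : α}, List.Forall₂ (· ≤ ·) (as ++ [x]) (b :: bs) →
      (b :: bs).Pairwise (· ≤ ·) → List.Forall₂ (· ≤ ·) as bs
  | [], [], _, _, _, _ => .nil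
  | _ :: _, _ :: _, _, _, .cons hab hf, hp =>
    .cons (hab.trans (List.rel_of_pairwise_cons hp List.mem_cons_self))
      (forall₂_of_append_singleton hf (List.pairwise_cons.mp hp).2)
  | [], _ :: _, _, _, hf, _ => by simpa using hf.length_eq
  | _ :: _, [], _, _, hf, _ => by simpa using hf.length_eq

theorem insertWord_reverse_eq_twoColumn :
    ∀ {as bs : List α} (cs : List α), List.Forall₂ (· ≤ ·) as bs → bs.Pairwise (· < ·) →
      insertWord ((as ++ cs).map fun x => [x]) bs.reverse = twoColumn as bs cs
  | [], [], _, _, _ => rfl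
  | as, b :: bs, cs, hf, hp => by
    obtain ⟨as, x, rfl⟩ : ∃ as' x, as = as' ++ [x] := by
      rcases as.eq_nil_or_concat' with rfl | h
      · simpa using hf.length_eq
      · exact h
    have ih := insertWord_reverse_eq_twoColumn (x :: cs)
      (forall₂_of_append_singleton hf (hp.imp le_of_lt)) (List.pairwise_cons.mp hp).2
    rw [insertWord] at ih
    rw [List.reverse_cons, insertWord, List.foldl_append, List.append_assoc, List.singleton_append,
      ih, List.foldl_cons, List.foldl_nil, tabInsert_twoColumn_append_singleton cs hf hp]

theorem IsTwoColumn.cons_cons_of_bump {a b v : α} {as bs cs as' bs' cs' : List α}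
    (h : IsTwoColumn (a :: as) (b :: bs) cs) (ha : a ≤ v) (hvb : v < b)
    (h' : IsTwoColumn as' bs' cs') (hb : ∀ y ∈ bs', b ≤ y)
    (hsub : as' ++ cs' ⊆ b :: (as ++ cs ++ bs)) : IsTwoColumn (a :: as') (v :: bs') cs' := by
  have hab : a ≤ b := (List.forall₂_cons.mp h.rows_le).1
  have hlt : ∀ z ∈ as' ++ cs', a < z := by
    intro z hz
    rcases List.mem_cons.mp (hsub hz) with rfl | hz
    · exact ha.trans_lt hvb
    rcases List.mem_append.mp hz with hz | hz
    · exact List.rel_of_pairwise_cons h.first_lt hz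
    · exact hab.trans_lt (List.rel_of_pairwise_cons h.second_lt hz)
  exact ⟨.cons ha h'.rows_le, List.pairwise_cons.mpr ⟨hlt, h'.first_lt⟩,
    List.pairwise_cons.mpr ⟨fun y hy => hvb.trans_le (hb y hy), h'.second_lt⟩⟩

theorem exists_tabInsert_twoColumn (cs : List α) :
    ∀ {as bs : List α} {v : α}, IsTwoColumn as bs cs → (∀ y ∈ bs, v < y) →
      ∃ as' bs' cs', tabInsert (twoColumn as bs cs) v = twoColumn as' bs' cs' ∧
        IsTwoColumn as' bs' cs' ∧ (∀ y ∈ bs', v ≤ y) ∧ as' ++ cs' ⊆ v :: (as ++ cs ++ bs)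
  | as, bs, v, h, hv => by
    -- Either `v` is smaller than the whole first column, which then slides up by one box, or `v`
    -- sits in the bottom row, bumping its second entry `b` (or filling the empty second box).
    by_cases hshift : (v :: (as ++ cs)).Pairwise (· < ·)
    · obtain ⟨as', cs', hins, heq, hf⟩ := tabInsert_twoColumn_of_lt cs h.rows_le
        (h.second_lt.imp le_of_lt) hshift fun y hy => (hv y hy).le
      refine ⟨as', bs, cs', hins, ⟨hf, heq ▸ hshift, h.second_lt⟩, fun y hy => (hv y hy).le, ?_⟩
      rw [heq]
      exact List.cons_subset_cons _ (List.subset_append_left _ _)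
    match as, h, hshift with
    | [], h, hshift =>
      obtain rfl := List.forall₂_nil_left_iff.mp h.rows_le
      rcases cs with _ | ⟨c, cs⟩
      · exact absurd (List.pairwise_singleton _ _) hshift
      have hc : c ≤ v := not_lt.mp fun hc => hshift (h.first_lt.cons_cons_of_trans hc)
      exact ⟨[c], [v], cs, tabInsert_singleton_cons_of_le _ hc,
        ⟨.cons hc .nil, h.first_lt, List.pairwise_singleton _ _⟩, by simp, by simp⟩
    | a :: as, h, hshift =>
      obtain ⟨b, bs, -, hf, rfl⟩ := List.forall₂_cons_left_iff.mp h.rows_le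
      have ha : a ≤ v := not_lt.mp fun ha => hshift (h.first_lt.cons_cons_of_trans ha)
      have hvb : v < b := hv b List.mem_cons_self
      obtain ⟨as', bs', cs', hins, h', hb, hsub⟩ := exists_tabInsert_twoColumn cs
        ⟨hf, (List.pairwise_cons.mp h.first_lt).2, (List.pairwise_cons.mp h.second_lt).2⟩
        fun y hy => List.rel_of_pairwise_cons h.second_lt hy
      refine ⟨a :: as', v :: bs', cs', ?_, h.cons_cons_of_bump ha hvb h' hb hsub, ?_, ?_⟩
      · rw [twoColumn_cons_cons, tabInsert_pair_cons_of_le_of_lt _ ha hvb, hins,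
          twoColumn_cons_cons]
      · simpa using fun y hy => hvb.le.trans (hb y hy)
      · intro z hz
        have := @hsub z
        simp only [List.cons_append, List.mem_cons, List.mem_append] at hz this ⊢
        tauto
termination_by as => as.length

theorem exists_insertWord_twoColumn :
    ∀ {w as bs cs : List α}, IsTwoColumn as bs cs → w.Pairwise (· > ·) →
      (∀ x ∈ w, ∀ y ∈ bs, x < y) →
      ∃ as' bs' cs', insertWord (twoColumn as bs cs) w = twoColumn as' bs' cs' ∧
        IsTwoColumn as' bs' cs'
  | [], as, bs, cs, h, _, _ => ⟨as, bs, cs, rfl, h⟩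
  | v :: w, _, _, cs, h, hw, hwb => by
    obtain ⟨as', bs', cs', hins, h', hv, -⟩ :=
      exists_tabInsert_twoColumn cs h (hwb v List.mem_cons_self)
    have hw' := List.pairwise_cons.mp hw
    obtain ⟨as'', bs'', cs'', hins', h''⟩ := exists_insertWord_twoColumn h' hw'.2
      fun x hx y hy => (hw'.1 x hx).trans_le (hv y hy)
    exact ⟨as'', bs'', cs'', by rwa [insertWord, List.foldl_cons, hins], h''⟩

theorem exists_tabProd_colTab_eq_twoColumn {c₁ c₂ : List α} (h₁ : IsCol c₁) (h₂ : IsCol c₂) :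
    ∃ as bs cs, tabProd (colTab c₁) (colTab c₂) = twoColumn as bs cs ∧ IsTwoColumn as bs cs := by
  have h : IsTwoColumn [] [] c₁.reverse := ⟨.nil, List.pairwise_reverse.mpr h₁, .nil⟩
  rw [tabProd_colTab, ← twoColumn_nil_nil]
  exact exists_insertWord_twoColumn h h₂ (by simp)

theorem tabProd_colTab_twoColumn {as bs : List α} (cs : List α) (hf : List.Forall₂ (· ≤ ·) as bs)
    (hb : bs.Pairwise (· < ·)) :
    tabProd (colTab (as ++ cs).reverse) (colTab bs.reverse) = twoColumn as bs cs := by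
  rw [tabProd_colTab, List.reverse_reverse, insertWord_reverse_eq_twoColumn cs hf hb]

end Plactic

/-- The column braiding `σ_C` is idempotent on pairs of columns. -/
theorem sigmaC_idempotent (c1 c2 : List α) (h1 : IsCol c1) (h2 : IsCol c2) :
    sigmaC (sigmaC c1 c2).1 (sigmaC c1 c2).2 = sigmaC c1 c2 := by
  obtain ⟨as, bs, cs, hT, h⟩ := Plactic.exists_tabProd_colTab_eq_twoColumn h1 h2
  have hlen := h.rows_le.length_eq
  rw [Plactic.sigmaC_eq_of_tabProd_eq hT hlen]
  exact Plactic.sigmaC_eq_of_tabProd_eq (Plactic.tabProd_colTab_twoColumn cs h.rows_le h.second_lt)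
    hlen
end

section
/- If σ_R(r1, r2) = (r3, r4) for rows r1, r2, then r3 is a subword of r1 obtained by deleting some letters, r2 is a subword of r4, and r3 strictly dominates r4 and r2 in the row order (x1...xs ≻_R y1...yt iff s ≤ t and x_i > y_i for all i ≤ s) whenever r3 is non-empty. -/
variable {α : Type*} [LinearOrder α]

/-!
Insert the row `r₂` letter by letter into the row `r₁`. Each letter bumps the leftmost letter
of the first row exceeding it, and since `r₂` is nondecreasing this happens strictly to the
right of the place where the previous letter went. So the first row evolves as a merge of `r₁`
and `r₂` (`insertRow`): scanning both from the left, a letter `y` of `r₁` stays if `y ≤ x` for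
the current letter `x` of `r₂`, and is otherwise replaced by `x` and bumped. The bumped letters
are thus a subword of `r₁`, hence a row, so they all settle in a single second row, and every
claim is a direct induction on the merge.
-/

/-- The first row and the bumped letters after inserting `w` into the row `b`. -/
def insertRow : List α → List α → List α × List α
  | [], w => (w, [])
  | b, [] => (b, [])
  | y :: b, x :: w =>
    if y ≤ x then (y :: (insertRow b (x :: w)).1, (insertRow b (x :: w)).2)
    else (x :: (insertRow b w).1, y :: (insertRow b w).2)

@[simp]
lemma insertRow_nil_right (b : List α) : insertRow b [] = (b, []) := by
  cases b <;> rfl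

lemma insertRow_cons_left_of_forall_le {y : α} (b : List α) {w : List α}
    (h : ∀ z ∈ w, y ≤ z) :
    insertRow (y :: b) w = (y :: (insertRow b w).1, (insertRow b w).2) := by
  cases w with
  | nil => simp
  | cons x w => simp [insertRow, h x (by simp)]

lemma rowInsert_of_forall_le {u : List α} {y : α} (h : ∀ a ∈ u, a ≤ y) :
    rowInsert u y = (u ++ [y], none) := by
  induction u with
  | nil => rfl
  | cons a u ih =>
    simp [rowInsert, h a (by simp), ih fun c hc => h c (by simp [hc])]

lemma insertRow_cons_right (b : List α) {x : α} {w : List α} (hx : ∀ z ∈ w, x ≤ z) :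
    insertRow b (x :: w) =
      ((insertRow (rowInsert b x).1 w).1,
        (rowInsert b x).2.toList ++ (insertRow (rowInsert b x).1 w).2) := by
  induction b with
  | nil => simp [insertRow, rowInsert, insertRow_cons_left_of_forall_le [] hx]
  | cons y b ih =>
    by_cases hyx : y ≤ x
    · have hy : ∀ z ∈ w, y ≤ z := fun z hz => hyx.trans (hx z hz)
      simp [insertRow, rowInsert, hyx, ih, insertRow_cons_left_of_forall_le _ hy]
    · simp [insertRow, rowInsert, hyx, insertRow_cons_left_of_forall_le b hx]

lemma insertWord_pair {w : List α} (hw : IsRow w) (b u : List α)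
    (hu : (u ++ (insertRow b w).2).Pairwise (· ≤ ·)) :
    insertWord [b, u] w = [(insertRow b w).1, u ++ (insertRow b w).2] := by
  induction w generalizing b u with
  | nil => simp [insertWord]
  | cons x w ih =>
    have hx : ∀ z ∈ w, x ≤ z := (List.pairwise_cons.mp hw).1
    rw [insertRow_cons_right b hx] at hu ⊢
    rcases hrow : rowInsert b x with ⟨b', o⟩
    rw [hrow] at hu
    dsimp only at hu ⊢
    have hstep : tabInsert [b, u] x = [b', u ++ o.toList] := by
      cases o with
      | none => simp [tabInsert, hrow]
      | some y =>
        have hy : ∀ a ∈ u, a ≤ y := fun a ha => (List.pairwise_append.mp hu).2.2 a ha y (by simp)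
        simp [tabInsert, hrow, rowInsert_of_forall_le hy]
    rw [← List.append_assoc] at hu ⊢
    exact (congrArg (insertWord · w) hstep).trans (ih hw.of_cons b' _ hu)

lemma insertRow_snd_sublist (b w : List α) : (insertRow b w).2.Sublist b := by
  induction b generalizing w with
  | nil => cases w <;> simp [insertRow]
  | cons y b ih =>
    cases w with
    | nil => simp
    | cons x w =>
      unfold insertRow
      split_ifs
      · exact (ih _).cons y
      · exact (ih w).cons_cons y

lemma sublist_insertRow_fst (b w : List α) : w.Sublist (insertRow b w).1 := by
  induction b generalizing w with
  | nil => cases w <;> simp [insertRow]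
  | cons y b ih =>
    cases w with
    | nil => simp
    | cons x w =>
      unfold insertRow
      split_ifs
      · exact (ih _).cons y
      · exact (ih w).cons_cons x

lemma rowDom_nil_left (l : List α) : RowDom [] l :=
  ⟨Nat.zero_le _, fun _ hu => absurd hu (Nat.not_lt_zero _)⟩

lemma RowDom.cons_cons {u l : List α} {a c : α} (hac : a < c) (h : RowDom u l) :
    RowDom (c :: u) (a :: l) := by
  refine ⟨Nat.succ_le_succ h.1, fun i hu hl => ?_⟩
  cases i with
  | zero => exact hac
  | succ i => exact h.2 i (Nat.lt_of_succ_lt_succ hu) (Nat.lt_of_succ_lt_succ hl)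

lemma RowDom.cons_right {u l : List α} {a : α} (h : RowDom u l) (hu : IsRow u)
    (ha : ∀ c ∈ u.head?, a < c) : RowDom u (a :: l) := by
  refine ⟨h.1.trans (Nat.le_succ _), fun i hi hl => ?_⟩
  cases i with
  | zero =>
    obtain ⟨c, u, rfl⟩ := List.exists_cons_of_length_pos hi
    simpa using ha c rfl
  | succ i =>
    calc (a :: l).get ⟨i + 1, hl⟩ = l.get ⟨i, Nat.lt_of_succ_lt_succ hl⟩ := rfl
      _ < u.get ⟨i, Nat.lt_of_succ_lt hi⟩ := h.2 i _ _
      _ ≤ u.get ⟨i + 1, hi⟩ := List.pairwise_iff_get.mp hu _ _ (Fin.mk_lt_mk.mpr i.lt_succ_self)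

lemma RowDom.lt_of_mem_head? {u l : List α} {a c : α} (h : RowDom u (a :: l))
    (hc : c ∈ u.head?) : a < c := by
  obtain ⟨u, rfl⟩ := List.head?_eq_some_iff.mp hc
  exact h.2 0 (Nat.succ_pos _) (Nat.succ_pos _)

lemma rowDom_insertRow_snd (b w : List α) : RowDom (insertRow b w).2 w := by
  induction b generalizing w with
  | nil => cases w <;> exact rowDom_nil_left _
  | cons y b ih =>
    cases w with
    | nil => exact rowDom_nil_left _
    | cons x w =>
      unfold insertRow
      split_ifs with hyx
      · exact ih _
      · exact (ih w).cons_cons (not_le.mp hyx)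

lemma rowDom_insertRow {b : List α} (hb : IsRow b) (w : List α) :
    RowDom (insertRow b w).2 (insertRow b w).1 := by
  induction b generalizing w with
  | nil => cases w <;> exact rowDom_nil_left _
  | cons y b ih =>
    cases w with
    | nil => exact rowDom_nil_left _
    | cons x w =>
      unfold insertRow
      split_ifs with hyx
      · refine (ih hb.of_cons _).cons_right (hb.of_cons.sublist (insertRow_snd_sublist b _)) ?_
        exact fun c hc => hyx.trans_lt ((rowDom_insertRow_snd b _).lt_of_mem_head? hc)
      · exact (ih hb.of_cons w).cons_cons (not_le.mp hyx)

lemma tabInsert_append_replicate_nil (t : List (List α)) (n : ℕ) (x : α) :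
    ∃ m, tabInsert (t ++ List.replicate n []) x = tabInsert t x ++ List.replicate m [] := by
  induction t generalizing x with
  | nil =>
    cases n with
    | zero => exact ⟨0, by simp⟩
    | succ n => exact ⟨n, by simp [tabInsert, rowInsert, List.replicate_succ]⟩
  | cons r t ih =>
    rcases hr : rowInsert r x with ⟨r', _ | y⟩
    · exact ⟨n, by simp [tabInsert, hr]⟩
    · obtain ⟨m, hm⟩ := ih y
      exact ⟨m, by simp [tabInsert, hr, hm]⟩

lemma insertWord_append_replicate_nil (t : List (List α)) (n : ℕ) (w : List α) :
    ∃ m, insertWord (t ++ List.replicate n []) w = insertWord t w ++ List.replicate m [] := by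
  induction w generalizing t n with
  | nil => exact ⟨n, rfl⟩
  | cons x w ih =>
    obtain ⟨k, hk⟩ := tabInsert_append_replicate_nil t n x
    obtain ⟨m, hm⟩ := ih (tabInsert t x) k
    exact ⟨m, by simp only [insertWord, List.foldl_cons, hk] at hm ⊢; exact hm⟩

theorem List.getD_append_replicate_default {β : Type*} (l : List β) (d : β) (m i : ℕ) :
    (l ++ List.replicate m d).getD i d = l.getD i d := by
  rcases lt_or_ge i l.length with hi | hi
  · exact List.getD_append _ _ _ _ hi
  · rw [List.getD_append_right _ _ _ _ hi, List.getD_eq_default _ _ hi]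
    simp [List.getD_eq_getElem?_getD]

lemma sigmaR_eq_insertRow {r1 r2 : List α} (h1 : IsRow r1) (h2 : IsRow r2) :
    sigmaR r1 r2 = ((insertRow r1 r2).2, (insertRow r1 r2).1) := by
  have hread : rowRead (rowTab r2) = r2 := by
    unfold rowTab rowRead
    split_ifs <;> simp [*]
  -- empty rows on top of a tableau do not affect insertion, up to further empty rows
  obtain ⟨n, hn⟩ : ∃ n, rowTab r1 ++ List.replicate n [] = [r1, []] := by
    unfold rowTab
    split_ifs with h
    · exact ⟨2, by simp [h]⟩
    · exact ⟨1, rfl⟩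
  obtain ⟨m, hm⟩ := insertWord_append_replicate_nil (rowTab r1) n r2
  rw [hn, insertWord_pair h2 r1 [] (h1.sublist (insertRow_snd_sublist r1 r2))] at hm
  have hgetD (i : ℕ) : (insertWord (rowTab r1) r2).getD i [] =
      [(insertRow r1 r2).1, (insertRow r1 r2).2].getD i [] := by
    rw [← List.getD_append_replicate_default _ _ m, ← hm, List.nil_append]
  simp only [sigmaR, tabProd, hread, hgetD]
  rfl

/-- If `σ_R (r₁, r₂) = (r₃, r₄)` for rows `r₁, r₂`, then `r₃` is a subword of
`r₁`, `r₂` is a subword of `r₄`, and, whenever `r₃` is non-empty, `r₃`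
strictly dominates both `r₄` and `r₂` in the row order. -/
theorem sigmaR_comparison (r1 r2 r3 r4 : List α) (h1 : IsRow r1) (h2 : IsRow r2)
    (h : sigmaR r1 r2 = (r3, r4)) :
    r3.Sublist r1 ∧ r2.Sublist r4 ∧ (r3 ≠ [] → RowDom r3 r4 ∧ RowDom r3 r2) := by
  rw [sigmaR_eq_insertRow h1 h2, Prod.mk.injEq] at h
  obtain ⟨rfl, rfl⟩ := h
  exact ⟨insertRow_snd_sublist r1 r2, sublist_insertRow_fst r1 r2,
    fun _ => ⟨rowDom_insertRow h1 r2, rowDom_insertRow_snd r1 r2⟩⟩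
end

section
/- For the column braiding σ_C, any three of the four columns a1, a2, a3, a4 with σ_C(a1, a2) = (a3, a4) determine the remaining one, and the pair (a1, a2) determines (a3, a4). -/
variable {α : Type*} [LinearOrder α]

/-!
The tableau `a₁ · a₂` is built by inserting the letters of `a₂` in decreasing order into the
column `a₁`; each letter lies below the whole current second column, so the tableau never grows a
third column. Hence the two columns of `σ_C (a₁, a₂)` together are a permutation of `a₁ a₂`.
A column is strictly decreasing, so it is determined by its content, and either of `a₁`, `a₂`
is recovered from the other and the content of `σ_C (a₁, a₂)`.
-/

open scoped List

theorem flatten_colTab {β : Type*} (c : List β) : (colTab c).flatten = c.reverse := by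
  rw [colTab, ← List.flatMap_def, List.flatMap_singleton']

theorem rowRead_colTab {β : Type*} (c : List β) : rowRead (colTab c) = c := by
  rw [rowRead, colTab, ← List.map_reverse, List.reverse_reverse, ← List.flatMap_def,
    List.flatMap_singleton']

theorem rowInsert_perm (r : List α) (x : α) :
    (rowInsert r x).1 ++ (rowInsert r x).2.toList ~ x :: r := by
  induction r with
  | nil => simp [rowInsert]
  | cons y r ih =>
    by_cases h : y ≤ x
    · simpa [rowInsert, h] using (ih.cons y).trans (List.Perm.swap x y r)
    · simp [rowInsert, h]

theorem tabInsert_perm (t : List (List α)) (x : α) :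
    (tabInsert t x).flatten ~ x :: t.flatten := by
  induction t generalizing x with
  | nil => simp [tabInsert]
  | cons r t ih =>
    have hr := rowInsert_perm r x
    rcases h : rowInsert r x with ⟨r', _ | b⟩
    · simpa [tabInsert, h] using hr.append_right t.flatten
    · simp only [h, Option.toList_some] at hr
      simpa [tabInsert, h] using ((ih b).append_left r').trans
        (by simpa using hr.append_right t.flatten)

theorem insertWord_perm (t : List (List α)) (w : List α) :
    (insertWord t w).flatten ~ t.flatten ++ w := by
  induction w generalizing t with
  | nil => simp [insertWord]
  | cons x w ih =>
    exact (ih _).trans (((tabInsert_perm t x).append_right w).trans List.perm_middle.symm)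

theorem colOf_zero_append_colOf_one_perm {β : Type*} {t : List (List β)}
    (ht : ∀ r ∈ t, r.length ≤ 2) : colOf t 0 ++ colOf t 1 ~ t.flatten := by
  have hrow : ∀ r ∈ t.reverse, r[0]?.toList ++ r[1]?.toList = r := by
    intro r hr
    match r, ht r (List.mem_reverse.1 hr) with
    | [], _ | [_], _ | [_, _], _ => rfl
  simp only [colOf, List.filterMap_eq_flatMap_toList]
  refine (List.flatMap_append_perm _ _ _).trans ?_
  rw [List.flatMap_congr hrow, List.flatMap_id']
  exact (List.reverse_perm t).flatten

theorem tabInsert_singleton_cons_of_le {u y : α} (t : List (List α)) (h : u ≤ y) :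
    tabInsert ([u] :: t) y = [u, y] :: t := by
  simp [tabInsert, rowInsert, h]

theorem tabInsert_singleton_cons_of_lt {u y : α} (t : List (List α)) (h : y < u) :
    tabInsert ([u] :: t) y = [y] :: tabInsert t u := by
  simp [tabInsert, rowInsert, not_le.2 h]

theorem tabInsert_pair_cons_of_le_of_lt {u v y : α} (t : List (List α)) (hu : u ≤ y)
    (hv : y < v) : tabInsert ([u, v] :: t) y = [u, y] :: tabInsert t v := by
  simp [tabInsert, rowInsert, hu, not_le.2 hv]

theorem tabInsert_pair_cons_of_lt {u v y : α} (t : List (List α)) (h : y < u) :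
    tabInsert ([u, v] :: t) y = [y, v] :: tabInsert t u := by
  simp [tabInsert, rowInsert, not_le.2 h]

inductive IsOneColumn : WithBot α → List (List α) → Prop
  | nil (a : WithBot α) : IsOneColumn a []
  | cons {a : WithBot α} {u : α} {t : List (List α)} :
      a < u → IsOneColumn u t → IsOneColumn a ([u] :: t)

/-- A tableau with at most two columns (rows listed bottom to top), whose first-column entries
are all `> a` and whose second-column entries are all `> b`. -/
inductive IsTwoColumn : WithBot α → WithBot α → List (List α) → Prop
  | one {a : WithBot α} (b : WithBot α) {t : List (List α)} : IsOneColumn a t → IsTwoColumn a b t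
  | cons {a b : WithBot α} {u v : α} {t : List (List α)} :
      a < u → b < v → u ≤ v → IsTwoColumn u v t → IsTwoColumn a b ([u, v] :: t)

theorem IsOneColumn.length_eq_one {a : WithBot α} {t : List (List α)} (h : IsOneColumn a t) :
    ∀ r ∈ t, r.length = 1 := by
  induction h with
  | nil => simp
  | cons _ _ ih => simpa using ih

theorem IsTwoColumn.length_le_two {a b : WithBot α} {t : List (List α)} (h : IsTwoColumn a b t) :
    ∀ r ∈ t, r.length ≤ 2 := by
  induction h with
  | one _ h => exact fun r hr => (h.length_eq_one r hr).trans_le one_le_two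
  | cons _ _ _ _ ih => simpa using ih

theorem isOneColumn_colTab {c : List α} (hc : IsCol c) : IsOneColumn ⊥ (colTab c) := by
  suffices ∀ (l : List α) (a : WithBot α), l.Pairwise (· < ·) → (∀ x ∈ l, a < x) →
      IsOneColumn a (l.map fun x => [x]) from
    this _ ⊥ (List.pairwise_reverse.2 hc) fun x _ => WithBot.bot_lt_coe x
  intro l
  induction l with
  | nil => exact fun a _ _ => .nil a
  | cons x l ih =>
    intro a hl ha
    rw [List.pairwise_cons] at hl
    exact .cons (ha x (by simp)) (ih x hl.2 fun z hz => WithBot.coe_lt_coe.2 (hl.1 z hz))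

/-- Inserting a letter below the whole first column shifts that column up by one row. -/
theorem IsOneColumn.tabInsert_of_le {a a' : WithBot α} {t : List (List α)} {y : α}
    (h : IsOneColumn a t) (hy : ↑y ≤ a) (ha' : a' < y) : IsOneColumn a' (tabInsert t y) := by
  induction h generalizing y a' with
  | nil => exact .cons ha' (.nil _)
  | @cons a u t hau _ ih =>
    have hyu : y < u := WithBot.coe_lt_coe.1 (hy.trans_lt hau)
    rw [tabInsert_singleton_cons_of_lt t hyu]
    exact .cons ha' (ih le_rfl (WithBot.coe_lt_coe.2 hyu))

theorem IsTwoColumn.tabInsert_of_le {a a' b : WithBot α} {t : List (List α)} {y : α}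
    (h : IsTwoColumn a b t) (hy : ↑y ≤ a) (ha' : a' < y) : IsTwoColumn a' b (tabInsert t y) := by
  induction h generalizing y a' with
  | one b h => exact .one b (h.tabInsert_of_le hy ha')
  | @cons a b u v t hau hbv huv _ ih =>
    have hyu : y < u := WithBot.coe_lt_coe.1 (hy.trans_lt hau)
    rw [tabInsert_pair_cons_of_lt t hyu]
    exact .cons ha' hbv (hyu.le.trans huv) (ih le_rfl (WithBot.coe_lt_coe.2 hyu))

/-- Only `y` and bumped second-column entries can land in the second column, so its entries
stay `≥ y`. -/
theorem IsTwoColumn.tabInsert {a b b' : WithBot α} {t : List (List α)} {y : α}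
    (h : IsTwoColumn a b t) (ha : a < y) (hb : ↑y ≤ b) (hb' : b' < y) :
    IsTwoColumn a b' (tabInsert t y) := by
  induction h generalizing y b' with
  | one b h =>
    cases h with
    | nil _ => exact .one b' (.cons ha (.nil _))
    | @cons a u t hau ht =>
      rcases le_or_gt u y with huy | hyu
      · rw [tabInsert_singleton_cons_of_le t huy]
        exact .cons hau hb' huy (.one y ht)
      · rw [tabInsert_singleton_cons_of_lt t hyu]
        exact .one b' (.cons ha (ht.tabInsert_of_le le_rfl (WithBot.coe_lt_coe.2 hyu)))
  | @cons a b u v t hau hbv huv ht ih =>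
    have hyv : y < v := WithBot.coe_lt_coe.1 (hb.trans_lt hbv)
    rcases le_or_gt u y with huy | hyu
    · rw [tabInsert_pair_cons_of_le_of_lt t huy hyv]
      exact .cons hau hb' huy
        (ih (WithBot.coe_lt_coe.2 (huy.trans_lt hyv)) le_rfl (WithBot.coe_lt_coe.2 hyv))
    · rw [tabInsert_pair_cons_of_lt t hyu]
      exact .cons ha (hb'.trans (hb.trans_lt hbv)) (hyu.le.trans huv)
        (ht.tabInsert_of_le le_rfl (WithBot.coe_lt_coe.2 hyu))

theorem IsTwoColumn.insertWord {b : WithBot α} {t : List (List α)} {w : List α}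
    (h : IsTwoColumn ⊥ b t) (hw : w.Pairwise (· > ·)) (hwb : ∀ x ∈ w, ↑x ≤ b) :
    ∃ b', IsTwoColumn ⊥ b' (insertWord t w) := by
  induction w generalizing t b with
  | nil => exact ⟨b, h⟩
  | cons x w ih =>
    rw [List.pairwise_cons] at hw
    have hmax : w.maximum < x := by
      cases hm : w.maximum with
      | bot => exact WithBot.bot_lt_coe x
      | coe m => exact WithBot.coe_lt_coe.2 (hw.1 m (List.maximum_mem hm))
    exact ih (h.tabInsert (WithBot.bot_lt_coe x) (hwb x (by simp)) hmax) hw.2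
      fun z hz => List.le_maximum_of_mem' hz

theorem IsCol.sigmaC_perm {c₁ c₂ : List α} (h₁ : IsCol c₁) (h₂ : IsCol c₂) :
    (sigmaC c₁ c₂).1 ++ (sigmaC c₁ c₂).2 ~ c₁ ++ c₂ := by
  have hprod : tabProd (colTab c₁) (colTab c₂) = insertWord (colTab c₁) c₂ := by
    rw [tabProd, rowRead_colTab]
  obtain ⟨b, htwo⟩ := (IsTwoColumn.one c₂.maximum (isOneColumn_colTab h₁)).insertWord h₂
    fun _ hx => List.le_maximum_of_mem' hx
  rw [sigmaC, hprod]
  refine (colOf_zero_append_colOf_one_perm htwo.length_le_two).trans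
    ((insertWord_perm _ _).trans ?_)
  rw [flatten_colTab]
  exact (List.reverse_perm c₁).append_right c₂

/-- Weak invertibility of the column braiding: with `σ_C (a₁, a₂) = (a₃, a₄)`,
any three of the four columns determine the remaining one (the pair `(a₁,a₂)`
determining `(a₃,a₄)` since `σ_C` is a map). -/
theorem sigmaC_weak_invertibility (a1 a2 b1 b2 : List α)
    (ha1 : IsCol a1) (ha2 : IsCol a2) (hb1 : IsCol b1) (hb2 : IsCol b2)
    (h : sigmaC a1 a2 = sigmaC b1 b2) :
    (a1 = b1 → a2 = b2) ∧ (a2 = b2 → a1 = b1) := by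
  have hperm : a1 ++ a2 ~ b1 ++ b2 :=
    (h ▸ (ha1.sigmaC_perm ha2).symm).trans (hb1.sigmaC_perm hb2)
  constructor
  · rintro rfl
    exact ((List.perm_append_left_iff a1).1 hperm).eq_of_pairwise' ha2 hb2
  · rintro rfl
    exact ((List.perm_append_right_iff a2).1 hperm).eq_of_pairwise' ha1 hb1
end

section
/- For any two Young tableaux T1, T2 on a totally ordered alphabet A, the number of rows of T1 * T2 is at most the number of rows of T1 plus the number of rows of T2, and the number of columns of T1 * T2 is at most the number of columns of T1 plus the number of columns of T2. -/
variable {α : Type*} [LinearOrder α]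

/-!
Rows: Schensted insertion of a nondecreasing word adds at most one row, since the letters it
bumps out of a row again form a nondecreasing word; the reading word of `t₂` is the
concatenation of its rows.

Columns: by Schensted's invariant, the bottom row of `t₁ * t₂` is no longer than some
nondecreasing subsequence of `r ++ rowRead t₂`, where `r` is the bottom row of `t₁`. Such a
subsequence has at most `cols t₁` letters in `r`. A nondecreasing subsequence of the reading
word of a tableau with letters `≤ c` is no longer than the number of letters `≤ c` in the bottom
row: induct on the rows, since strictly increasing columns give each row at most as many
letters `≤ a` as the row below it has letters `< a`.
-/

theorem forall_le_or_exists_first_gt : ∀ (r : List α) (x : α),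
    (∀ a ∈ r, a ≤ x) ∨ ∃ p, ∃ hp : p < r.length, (∀ i (hi : i < p), r[i] ≤ x) ∧ x < r[p]
  | [], _ => .inl (by simp)
  | y :: r, x => by
    by_cases hy : y ≤ x
    · rcases forall_le_or_exists_first_gt r x with hle | ⟨p, hp, hlo, hx⟩
      · exact .inl (by simpa [hy] using hle)
      · refine .inr ⟨p + 1, by simpa using hp, fun i hi => ?_, by simpa using hx⟩
        cases i with
        | zero => simpa using hy
        | succ i => simpa using hlo i (by omega)
    · exact .inr ⟨0, by simp, by simp, by simpa using hy⟩

theorem rowInsert_eq_of_forall_le : ∀ {r : List α} {x : α},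
    (∀ a ∈ r, a ≤ x) → rowInsert r x = (r ++ [x], none)
  | [], _, _ => rfl
  | y :: r, x, h => by
    simp only [List.mem_cons, forall_eq_or_imp] at h
    simp [rowInsert, h.1, rowInsert_eq_of_forall_le h.2]

theorem rowInsert_eq_set : ∀ {r : List α} {x : α} {p : ℕ} (hp : p < r.length),
    (∀ i (hi : i < p), r[i] ≤ x) → x < r[p] → rowInsert r x = (r.set p x, some r[p])
  | y :: r, x, 0, _, _, hx => by
    simp only [List.getElem_cons_zero] at hx
    simp [rowInsert, not_le.2 hx]
  | y :: r, x, p + 1, hp, hlo, hx => by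
    have hy : y ≤ x := hlo 0 (by omega)
    have ih := rowInsert_eq_set (r := r) (by simpa using hp)
      (fun i hi => by simpa using hlo (i + 1) (by omega)) (by simpa using hx)
    simp [rowInsert, hy, ih]

theorem rowInsert_fst_sorted {r : List α} (hr : r.Pairwise (· ≤ ·)) (x : α) :
    (rowInsert r x).1.Pairwise (· ≤ ·) := by
  rcases forall_le_or_exists_first_gt r x with hle | ⟨p, hp, hlo, hx⟩
  · rw [rowInsert_eq_of_forall_le hle, List.pairwise_append]
    exact ⟨hr, by simp, by simpa using hle⟩
  · rw [rowInsert_eq_set hp hlo hx, List.pairwise_iff_getElem]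
    intro i j hi hj hij
    have hmono := hr.sortedLE.getElem_le_getElem_of_le
    simp only [List.length_set] at hi hj
    simp only [List.getElem_set]
    split_ifs with hpi hpj hpj
    · exact le_rfl
    · exact hx.le.trans (hmono (by omega))
    · exact hlo i (by omega)
    · exact hmono hij.le

theorem mem_rowInsert_fst {r : List α} {x b : α} (hb : b ∈ (rowInsert r x).1) :
    b = x ∨ b ∈ r := by
  rcases forall_le_or_exists_first_gt r x with hle | ⟨p, hp, hlo, hx⟩
  · rw [rowInsert_eq_of_forall_le hle] at hb
    simpa [or_comm] using hb
  · rw [rowInsert_eq_set hp hlo hx] at hb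
    exact (List.mem_or_eq_of_mem_set hb).symm

theorem rowInsert_snd_eq_some {r : List α} {x y : α} (h : (rowInsert r x).2 = some y) :
    y ∈ r ∧ x < y := by
  rcases forall_le_or_exists_first_gt r x with hle | ⟨p, hp, hlo, hx⟩
  · simp [rowInsert_eq_of_forall_le hle] at h
  · obtain rfl : r[p] = y := by simpa [rowInsert_eq_set hp hlo hx] using h
    exact ⟨List.getElem_mem hp, hx⟩

theorem rowInsert_snd_le {r : List α} (hr : r.Pairwise (· ≤ ·)) {x y : α}
    (h : (rowInsert r x).2 = some y) {a : α} (ha : a ∈ r) (hxa : x < a) : y ≤ a := by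
  rcases forall_le_or_exists_first_gt r x with hle | ⟨p, hp, hlo, hx⟩
  · simp [rowInsert_eq_of_forall_le hle] at h
  · obtain rfl : r[p] = y := by simpa [rowInsert_eq_set hp hlo hx] using h
    obtain ⟨i, hi, rfl⟩ := List.mem_iff_getElem.1 ha
    by_cases hip : i < p
    · exact absurd (hlo i hip) (not_le.2 hxa)
    · exact hr.sortedLE.getElem_le_getElem_of_le (not_lt.1 hip)

def rowInsertWord : List α → List α → List α × List α
  | r, [] => (r, [])
  | r, x :: w =>
    let q := rowInsertWord (rowInsert r x).1 w
    (q.1, (rowInsert r x).2.toList ++ q.2)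

theorem insertWord_append (t : List (List α)) (u v : List α) :
    insertWord t (u ++ v) = insertWord (insertWord t u) v :=
  List.foldl_append

theorem insertWord_nil_cons (x : α) (w : List α) :
    insertWord [] (x :: w) = insertWord [[]] (x :: w) :=
  rfl

theorem tabInsert_cons (r : List α) (t : List (List α)) (x : α) :
    tabInsert (r :: t) x = (rowInsert r x).1 :: insertWord t (rowInsert r x).2.toList := by
  rw [tabInsert]
  rcases rowInsert r x with ⟨r', _ | y⟩ <;> rfl

theorem insertWord_cons : ∀ (r : List α) (t : List (List α)) (w : List α),
    insertWord (r :: t) w = (rowInsertWord r w).1 :: insertWord t (rowInsertWord r w).2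
  | _, _, [] => rfl
  | r, t, x :: w => by
    rw [show insertWord (r :: t) (x :: w) = insertWord (tabInsert (r :: t) x) w from rfl,
      tabInsert_cons, insertWord_cons, ← insertWord_append]
    rfl

theorem mem_rowInsertWord_snd : ∀ {r w : List α}, w.Pairwise (· ≤ ·) →
    ∀ b ∈ (rowInsertWord r w).2, b ∈ r ∧ ∃ x ∈ w, x < b
  | _, [], _, b, hb => by simp [rowInsertWord] at hb
  | r, x :: w, hw, b, hb => by
    obtain ⟨hxw, hw⟩ := List.pairwise_cons.1 hw
    simp only [rowInsertWord, List.mem_append, Option.mem_toList] at hb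
    rcases hb with hb | hb
    · obtain ⟨hbr, hxb⟩ := rowInsert_snd_eq_some hb
      exact ⟨hbr, x, List.mem_cons_self, hxb⟩
    · obtain ⟨hbr, x', hx', hx'b⟩ := mem_rowInsertWord_snd hw b hb
      refine ⟨(mem_rowInsert_fst hbr).resolve_left ?_, x', List.mem_cons_of_mem x hx', hx'b⟩
      rintro rfl
      exact (hxw x' hx').not_gt hx'b

theorem rowInsertWord_snd_sorted : ∀ {r w : List α}, r.Pairwise (· ≤ ·) →
    w.Pairwise (· ≤ ·) → (rowInsertWord r w).2.Pairwise (· ≤ ·)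
  | _, [], _, _ => List.Pairwise.nil
  | r, x :: w, hr, hxw => by
    have hw := (List.pairwise_cons.1 hxw).2
    have ih := rowInsertWord_snd_sorted (rowInsert_fst_sorted hr x) hw
    rcases hy : (rowInsert r x).2 with _ | y
    · simpa [rowInsertWord, hy] using ih
    · have hbumped := mem_rowInsertWord_snd (r := r) hxw
      simp only [rowInsertWord, hy, Option.toList_some, List.singleton_append] at hbumped ⊢
      refine List.pairwise_cons.2 ⟨fun b hb => ?_, ih⟩
      obtain ⟨hbr, x', hx', hx'b⟩ := hbumped b (List.mem_cons_of_mem y hb)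
      have hxx' : x ≤ x' := by
        rcases List.mem_cons.1 hx' with rfl | hx'
        exacts [le_rfl, List.rel_of_pairwise_cons hxw hx']
      exact rowInsert_snd_le hr hy hbr (hxx'.trans_lt hx'b)

theorem tabInsert_rows_sorted : ∀ {t : List (List α)}, (∀ r ∈ t, r.Pairwise (· ≤ ·)) →
    ∀ (x : α), ∀ r ∈ tabInsert t x, r.Pairwise (· ≤ ·)
  | [], _, x => by simp [tabInsert]
  | r :: t, ht, x => by
    intro r' hr'
    rw [tabInsert_cons, List.mem_cons] at hr'
    rcases hr' with rfl | hr'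
    · exact rowInsert_fst_sorted (ht r List.mem_cons_self) x
    · have ht' : ∀ r ∈ t, r.Pairwise (· ≤ ·) := fun r hr => ht r (List.mem_cons_of_mem _ hr)
      rcases hy : (rowInsert r x).2 with _ | y <;> rw [hy] at hr'
      · exact ht' r' hr'
      · exact tabInsert_rows_sorted ht' y r' hr'

theorem insertWord_rows_sorted {t : List (List α)} (ht : ∀ r ∈ t, r.Pairwise (· ≤ ·))
    (w : List α) : ∀ r ∈ insertWord t w, r.Pairwise (· ≤ ·) := by
  induction w generalizing t with
  | nil => exact ht
  | cons x w ih => exact ih (tabInsert_rows_sorted ht x)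

theorem length_insertWord_le {t : List (List α)} (ht : ∀ r ∈ t, r.Pairwise (· ≤ ·))
    {u : List α} (hu : u.Pairwise (· ≤ ·)) : (insertWord t u).length ≤ t.length + 1 := by
  induction t generalizing u with
  | nil =>
    cases u with
    | nil => simp [insertWord]
    | cons x u =>
      have hnothing_bumped : (rowInsertWord [] (x :: u)).2 = [] :=
        List.eq_nil_iff_forall_not_mem.2 fun b hb => by
          simpa using (mem_rowInsertWord_snd hu b hb).1
      rw [insertWord_nil_cons, insertWord_cons, hnothing_bumped]
      simp [insertWord]
  | cons r t ih =>
    rw [insertWord_cons, List.length_cons, List.length_cons, Nat.add_le_add_iff_right]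
    exact ih (fun r' hr' => ht r' (List.mem_cons_of_mem _ hr'))
      (rowInsertWord_snd_sorted (ht r List.mem_cons_self) hu)

theorem length_insertWord_flatten_le {t : List (List α)} (ht : ∀ r ∈ t, r.Pairwise (· ≤ ·))
    {L : List (List α)} (hL : ∀ u ∈ L, u.Pairwise (· ≤ ·)) :
    (insertWord t L.flatten).length ≤ t.length + L.length := by
  induction L generalizing t with
  | nil => simp [insertWord]
  | cons u L ih =>
    rw [List.flatten_cons, insertWord_append]
    have hu := hL u List.mem_cons_self
    calc (insertWord (insertWord t u) L.flatten).length
        ≤ (insertWord t u).length + L.length :=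
          ih (insertWord_rows_sorted ht u) fun v hv => hL v (List.mem_cons_of_mem _ hv)
      _ ≤ t.length + (u :: L).length := by
          have := length_insertWord_le ht hu
          simp only [List.length_cons]
          omega

def HasSortedSublistBelow (v : List α) (n : ℕ) (c : α) : Prop :=
  ∃ s : List α, s.Sublist v ∧ s.Pairwise (· ≤ ·) ∧ s.length = n ∧ ∀ a ∈ s, a ≤ c

theorem hasSortedSublistBelow_zero (v : List α) (c : α) : HasSortedSublistBelow v 0 c :=
  ⟨[], List.nil_sublist v, List.Pairwise.nil, rfl, by simp⟩

namespace HasSortedSublistBelow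

variable {v : List α} {n : ℕ} {c : α}

theorem append_right (h : HasSortedSublistBelow v n c) {c' : α} (hc : c ≤ c') (u : List α) :
    HasSortedSublistBelow (v ++ u) n c' :=
  let ⟨s, hsub, hs, hlen, hle⟩ := h
  ⟨s, hsub.trans (List.sublist_append_left v u), hs, hlen, fun a ha => (hle a ha).trans hc⟩

theorem append_singleton (h : HasSortedSublistBelow v n c) {x : α} (hc : c ≤ x) :
    HasSortedSublistBelow (v ++ [x]) (n + 1) x := by
  obtain ⟨s, hsub, hs, hlen, hle⟩ := h
  have hle_x : ∀ a ∈ s, a ≤ x := fun a ha => (hle a ha).trans hc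
  refine ⟨s ++ [x], hsub.append (List.Sublist.refl [x]), ?_, by simp [hlen], ?_⟩
  · exact List.pairwise_append.2 ⟨hs, by simp, by simpa using hle_x⟩
  · simp only [List.mem_append, List.mem_singleton]
    rintro a (ha | rfl)
    exacts [hle_x a ha, le_rfl]

end HasSortedSublistBelow

/-- Schensted's invariant for the first row `ρ` of the insertion tableau of `v`. -/
def BoundsSortedSublists (ρ v : List α) : Prop :=
  ∀ j (hj : j < ρ.length), HasSortedSublistBelow v (j + 1) ρ[j]

namespace BoundsSortedSublists

variable {ρ v : List α}

theorem self (hρ : ρ.Pairwise (· ≤ ·)) : BoundsSortedSublists ρ ρ := fun j hj =>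
  ⟨ρ.take (j + 1), List.take_sublist _ _, hρ.sublist (List.take_sublist _ _),
    by simp; omega, fun a ha => by
      obtain ⟨i, hi, rfl⟩ := List.mem_take_iff_getElem.1 ha
      exact hρ.sortedLE.getElem_le_getElem_of_le (by omega)⟩

theorem exists_sorted_sublist (h : BoundsSortedSublists ρ v) :
    ∃ s : List α, s.Sublist v ∧ s.Pairwise (· ≤ ·) ∧ s.length = ρ.length := by
  rcases Nat.eq_zero_or_pos ρ.length with h0 | hpos
  · exact ⟨[], List.nil_sublist v, List.Pairwise.nil, h0.symm⟩
  · obtain ⟨s, hsub, hs, hlen, -⟩ := h (ρ.length - 1) (by omega)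
    exact ⟨s, hsub, hs, by omega⟩

theorem hasSortedSublistBelow_append_singleton (h : BoundsSortedSublists ρ v) {x : α} {j : ℕ}
    (hj : j ≤ ρ.length) (hx : ∀ i (hi : i < ρ.length), i + 1 = j → ρ[i] ≤ x) :
    HasSortedSublistBelow (v ++ [x]) (j + 1) x := by
  cases j with
  | zero => exact (hasSortedSublistBelow_zero v x).append_singleton le_rfl
  | succ i => exact (h i (by omega)).append_singleton (hx i (by omega) rfl)

theorem rowInsert (h : BoundsSortedSublists ρ v) (x : α) :
    BoundsSortedSublists (rowInsert ρ x).1 (v ++ [x]) := by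
  rcases forall_le_or_exists_first_gt ρ x with hle | ⟨p, hp, hlo, hx⟩
  · rw [rowInsert_eq_of_forall_le hle]
    intro j hj
    rw [List.length_append, List.length_singleton] at hj
    by_cases hjρ : j < ρ.length
    · rw [List.getElem_append_left hjρ]
      exact (h j hjρ).append_right le_rfl [x]
    · obtain rfl : j = ρ.length := by omega
      simpa using h.hasSortedSublistBelow_append_singleton le_rfl
        fun i hi _ => hle _ (List.getElem_mem hi)
  · rw [rowInsert_eq_set hp hlo hx]
    intro j hj
    rw [List.length_set] at hj
    by_cases hjp : j = p
    · subst hjp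
      simpa using h.hasSortedSublistBelow_append_singleton hp.le fun i hi hij => hlo i (by omega)
    · rw [List.getElem_set_ne (Ne.symm hjp)]
      exact (h j hj).append_right le_rfl [x]

theorem rowInsertWord (h : BoundsSortedSublists ρ v) (w : List α) :
    BoundsSortedSublists (rowInsertWord ρ w).1 (v ++ w) := by
  induction w generalizing ρ v with
  | nil => simpa [_root_.rowInsertWord] using h
  | cons x w ih => simpa [_root_.rowInsertWord] using ih (h.rowInsert x)

end BoundsSortedSublists

theorem cols_insertWord (t : List (List α)) (w : List α) :
    cols (insertWord t w) = (rowInsertWord (t.headD []) w).1.length := by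
  rcases t with _ | ⟨r, t⟩
  · rcases w with _ | ⟨x, w⟩
    · rfl
    · rw [insertWord_nil_cons, insertWord_cons]
      rfl
  · rw [insertWord_cons]
    rfl

theorem RowDom.cons_cons_s9 {x y : α} {m b : List α} (h : RowDom (x :: m) (y :: b)) :
    y < x ∧ RowDom m b :=
  ⟨by simpa using h.2 0 (by simp) (by simp), by simpa using h.1,
    fun i hm hb => by simpa using h.2 (i + 1) (by simpa using hm) (by simpa using hb)⟩

theorem RowDom.countP_le_countP_lt : ∀ {m b : List α}, RowDom m b → m.Pairwise (· ≤ ·) →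
    ∀ a : α, m.countP (· ≤ a) ≤ b.countP (· < a)
  | [], _, _, _, _ => by simp
  | _ :: _, [], h, _, _ => by simpa using h.1
  | x :: m, y :: b, h, hm, a => by
    obtain ⟨hyx, h⟩ := h.cons_cons_s9
    by_cases hxa : x ≤ a
    · simpa [List.countP_cons, hxa, hyx.trans_le hxa] using h.countP_le_countP_lt hm.of_cons a
    · have hnone : (x :: m).countP (· ≤ a) = 0 := by
        refine List.countP_eq_zero.2 fun z hz => ?_
        rcases List.mem_cons.1 hz with rfl | hz
        · simpa using hxa
        · simpa using fun hza => hxa ((List.rel_of_pairwise_cons hm hz).trans hza)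
      simp [hnone]

theorem IsTableau.tail {r : List α} {t : List (List α)} (h : IsTableau (r :: t)) : IsTableau t :=
  ⟨fun r' hr' => h.1 r' (List.mem_cons_of_mem r hr'), h.2.tail⟩

theorem IsTableau.countP_headD_le {b : List α} {t : List (List α)} (h : IsTableau (b :: t))
    (a : α) : (t.headD []).countP (· ≤ a) ≤ b.countP (· < a) := by
  cases t with
  | nil => simp
  | cons m t => exact (List.isChain_cons_cons.1 h.2).1.countP_le_countP_lt (h.1 m (by simp)).2 a

theorem countP_lt_add_countP_Icc (l : List α) {a c : α} (h : a ≤ c) :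
    l.countP (· < a) + l.countP (fun y => a ≤ y ∧ y ≤ c) = l.countP (· ≤ c) := by
  induction l with
  | nil => rfl
  | cons y l ih =>
    rw [List.countP_cons, List.countP_cons, List.countP_cons, ← ih]
    simp only [decide_eq_true_eq]
    split_ifs <;> grind

theorem IsTableau.length_le_countP_of_sublist_rowRead {t : List (List α)} (ht : IsTableau t)
    {s : List α} (hs : s.Pairwise (· ≤ ·)) (hsub : s.Sublist (rowRead t)) {c : α}
    (hc : ∀ a ∈ s, a ≤ c) : s.length ≤ (t.headD []).countP (· ≤ c) := by
  induction t generalizing s c with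
  | nil => simp [List.sublist_nil.1 hsub]
  | cons b t ih =>
    rw [show rowRead (b :: t) = rowRead t ++ b by simp [rowRead]] at hsub
    obtain ⟨u, v, rfl, hu, hv⟩ := List.sublist_append_iff.1 hsub
    obtain ⟨hus, hvs, huv⟩ := List.pairwise_append.1 hs
    -- `a` separates the letters taken from the upper rows from those taken from the bottom row
    obtain ⟨a, hac, hua, hva⟩ :
        ∃ a, a ≤ c ∧ (∀ y ∈ u, y ≤ a) ∧ ∀ y ∈ v, a ≤ y ∧ y ≤ c := by
      rcases v with _ | ⟨y₀, v⟩
      · exact ⟨c, le_rfl, fun y hy => hc y (by simp [hy]), by simp⟩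
      · refine ⟨y₀, hc y₀ (by simp), fun y hy => huv y hy y₀ List.mem_cons_self,
          fun y hy => ⟨?_, hc y (by simp [hy])⟩⟩
        rcases List.mem_cons.1 hy with rfl | hy
        exacts [le_rfl, List.rel_of_pairwise_cons hvs hy]
    have hu_len : u.length ≤ b.countP (· < a) :=
      (ih ht.tail hus hu hua).trans (ht.countP_headD_le a)
    have hv_len : v.length ≤ b.countP (fun y => a ≤ y ∧ y ≤ c) := by
      rw [← (List.countP_eq_length (p := fun y => decide (a ≤ y ∧ y ≤ c))).2 (by simpa using hva)]
      exact hv.countP_le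
    calc (u ++ v).length = u.length + v.length := List.length_append
      _ ≤ b.countP (· < a) + b.countP (fun y => a ≤ y ∧ y ≤ c) := add_le_add hu_len hv_len
      _ = b.countP (· ≤ c) := countP_lt_add_countP_Icc b hac

theorem IsTableau.length_le_cols_of_sublist_rowRead {t : List (List α)} (ht : IsTableau t)
    {s : List α} (hs : s.Pairwise (· ≤ ·)) (hsub : s.Sublist (rowRead t)) :
    s.length ≤ cols t := by
  rcases eq_or_ne s [] with rfl | hne
  · exact Nat.zero_le _
  · exact (ht.length_le_countP_of_sublist_rowRead hs hsub (c := s.getLast hne)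
      fun a ha => hs.rel_getLast ha).trans List.countP_le_length

/-- Subadditivity of the number of rows and of the number of columns with
respect to the plactic product of Young tableaux. -/
theorem rows_cols_subadditive (t1 t2 : List (List α))
    (h1 : IsTableau t1) (h2 : IsTableau t2) :
    (tabProd t1 t2).length ≤ t1.length + t2.length ∧
      cols (tabProd t1 t2) ≤ cols t1 + cols t2 := by
  have hrows1 : ∀ r ∈ t1, r.Pairwise (· ≤ ·) := fun r hr => (h1.1 r hr).2
  constructor
  · simpa [tabProd, rowRead] using length_insertWord_flatten_le hrows1 (L := t2.reverse)
      fun r hr => (h2.1 r (List.mem_reverse.1 hr)).2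
  · have hbottom : (t1.headD []).Pairwise (· ≤ ·) := by
      cases t1 with
      | nil => exact List.Pairwise.nil
      | cons r t => exact hrows1 r List.mem_cons_self
    obtain ⟨s, hsub, hs, hlen⟩ :=
      ((BoundsSortedSublists.self hbottom).rowInsertWord (rowRead t2)).exists_sorted_sublist
    obtain ⟨u, v, rfl, hu, hv⟩ := List.sublist_append_iff.1 hsub
    calc cols (tabProd t1 t2) = u.length + v.length := by
          rw [tabProd, cols_insertWord, ← hlen, List.length_append]
      _ ≤ cols t1 + cols t2 := add_le_add hu.length_le
          (h2.length_le_cols_of_sublist_rowRead (hs.sublist (List.sublist_append_right u v)) hv)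
end

section
/- Every column commutes in the plactic monoid with each of its subcolumns: if c is a strictly decreasing word over A and c' is obtained from c by deleting some letters, then c c' = c' c holds in Pl_A. -/
variable {α : Type*} [LinearOrder α]

/-- The Knuth relations on the free monoid. -/
inductive KnuthRel {α : Type*} [LinearOrder α] : FreeMonoid α → FreeMonoid α → Prop
  | col {x y z : α} : x ≤ y → y < z →
      KnuthRel (FreeMonoid.of x * FreeMonoid.of z * FreeMonoid.of y)
               (FreeMonoid.of z * FreeMonoid.of x * FreeMonoid.of y)
  | row {x y z : α} : x < y → y ≤ z →
      KnuthRel (FreeMonoid.of y * FreeMonoid.of x * FreeMonoid.of z)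
               (FreeMonoid.of y * FreeMonoid.of z * FreeMonoid.of x)

/-- The plactic monoid: the quotient of the free monoid on `α` by the
Knuth relations. -/
abbrev Plactic (α : Type*) [LinearOrder α] :=
  (conGen (KnuthRel (α := α))).Quotient

/-- The class of a word in the plactic monoid. -/
def plMk (w : List α) : Plactic α :=
  Con.mk' _ (FreeMonoid.ofList w)

/-!
A column `c` commutes with each of its letters, and a subcolumn is a product of letters of `c`.
To move a letter `x` of `c = a :: t` from the right end of `c` to its front, induct on `c`.
If `x` lies in `t`, move it to the front of `t` and then past `a` by the column relation
`a x b ≡ x a b` (`x ≤ b < a`, where `b` is the head of `t`). If `x = a`, slide it leftwards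
through `t` by the row relations `b c a ≡ b a c` (`c < b ≤ a`) until it stands next to `a`.
-/

lemma plMk_append (u v : List α) : plMk (u ++ v) = plMk u * plMk v := by
  simp [plMk, FreeMonoid.ofList_append]

lemma plMk_cons (a : α) (w : List α) : plMk (a :: w) = plMk [a] * plMk w :=
  plMk_append [a] w

lemma plMk_triple (x y z : α) :
    plMk [x, y, z] =
      Con.mk' (conGen KnuthRel) (FreeMonoid.of x * FreeMonoid.of y * FreeMonoid.of z) := by
  simp [plMk, FreeMonoid.ofList_cons, mul_assoc]

lemma plMk_eq_of_knuthRel {u v : FreeMonoid α} (h : KnuthRel u v) :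
    (Con.mk' (conGen KnuthRel) u : Plactic α) = Con.mk' _ v :=
  (Con.eq _).2 (ConGen.Rel.of _ _ h)

lemma plMk_knuth_col {x y z : α} (hxy : x ≤ y) (hyz : y < z) (w : List α) :
    plMk (x :: z :: y :: w) = plMk (z :: x :: y :: w) := by
  show plMk ([x, z, y] ++ w) = plMk ([z, x, y] ++ w)
  rw [plMk_append, plMk_append, plMk_triple, plMk_triple,
    plMk_eq_of_knuthRel (KnuthRel.col hxy hyz)]

lemma plMk_knuth_row {x y z : α} (hxy : x < y) (hyz : y ≤ z) (w : List α) :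
    plMk (y :: x :: z :: w) = plMk (y :: z :: x :: w) := by
  show plMk ([y, x, z] ++ w) = plMk ([y, z, x] ++ w)
  rw [plMk_append, plMk_append, plMk_triple, plMk_triple,
    plMk_eq_of_knuthRel (KnuthRel.row hxy hyz)]

lemma isCol_cons {a : α} {t : List α} : IsCol (a :: t) ↔ (∀ b ∈ t, b < a) ∧ IsCol t :=
  List.pairwise_cons

lemma plMk_cons_append_singleton_of_lt {a b : α} {u : List α} (hu : IsCol u)
    (hub : ∀ c ∈ u, c < b) (hba : b ≤ a) :
    plMk (b :: (u ++ [a])) = plMk (b :: a :: u) := by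
  induction u generalizing b with
  | nil => rfl
  | cons c v ih =>
    obtain ⟨hvc, hv⟩ := isCol_cons.1 hu
    have hcb : c < b := hub c List.mem_cons_self
    calc plMk (b :: c :: (v ++ [a]))
        = plMk [b] * plMk (c :: (v ++ [a])) := plMk_cons _ _
      _ = plMk [b] * plMk (c :: a :: v) := by rw [ih hv hvc (hcb.le.trans hba)]
      _ = plMk (b :: a :: c :: v) := by rw [← plMk_cons, plMk_knuth_row hcb hba]

lemma plMk_append_singleton_of_mem {c : List α} (hc : IsCol c) {x : α} (hx : x ∈ c) :
    plMk (c ++ [x]) = plMk (x :: c) := by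
  induction c with
  | nil => cases hx
  | cons a t ih =>
    obtain ⟨hta, ht⟩ := isCol_cons.1 hc
    rcases List.mem_cons.1 hx with rfl | hxt
    · exact plMk_cons_append_singleton_of_lt ht hta le_rfl
    · obtain ⟨b, u, rfl⟩ := List.exists_cons_of_ne_nil (List.ne_nil_of_mem hxt)
      have hxb : x ≤ b := by
        rcases List.mem_cons.1 hxt with rfl | hxu
        · exact le_rfl
        · exact ((isCol_cons.1 ht).1 x hxu).le
      calc plMk (a :: (b :: u ++ [x]))
          = plMk [a] * plMk (x :: b :: u) := by rw [plMk_cons, ih ht hxt]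
        _ = plMk (x :: a :: b :: u) := by
          rw [← plMk_cons, plMk_knuth_col hxb (hta b List.mem_cons_self)]

lemma commute_plMk_singleton_of_mem {c : List α} (hc : IsCol c) {x : α} (hx : x ∈ c) :
    Commute (plMk c) (plMk [x]) := by
  rw [Commute, SemiconjBy, ← plMk_append, plMk_append_singleton_of_mem hc hx, plMk_cons]

lemma commute_plMk_of_subset {c w : List α} (hc : IsCol c) (hw : w ⊆ c) :
    Commute (plMk c) (plMk w) := by
  induction w with
  | nil => exact Commute.one_right _
  | cons x s ih =>
    rw [List.cons_subset] at hw
    rw [plMk_cons]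
    exact (commute_plMk_singleton_of_mem hc hw.1).mul_right (ih hw.2)

/-- Every column commutes in the plactic monoid with each of its subcolumns:
if `c` is strictly decreasing and `c'` is obtained from `c` by deleting some
letters, then `c c' = c' c` in `Pl_α`. -/
theorem column_commutes_with_subcolumn (c c' : List α)
    (hc : IsCol c) (hsub : c'.Sublist c) :
    plMk (α := α) c * plMk c' = plMk c' * plMk c :=
  (commute_plMk_of_subset hc hsub.subset).eq
end

section
/- For any idempotent braided set (X, σ), the tautological map from the set of normal words Norm(X,σ) (words x1...xk with σ(x_j, x_{j+1}) = (x_j, x_{j+1}) for all j) to the structure monoid M(X,σ) is a bijection; every element of M(X,σ) has a unique normal form, computed by applying the longest element Δ_k = b1 (b2 b1) ⋯ (b_{k-1} ⋯ b2 b1) of the Coxeter monoid to any representative word of length k. -/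
variable {X : Type*}

/-- The map `σ × Id` on triples. -/
def m12 (σ : X × X → X × X) : X × X × X → X × X × X :=
  fun p => ((σ (p.1, p.2.1)).1, (σ (p.1, p.2.1)).2, p.2.2)

/-- The map `Id × σ` on triples. -/
def m23 (σ : X × X → X × X) : X × X × X → X × X × X :=
  fun p => (p.1, σ (p.2.1, p.2.2))

/-- A braiding: a set-theoretic solution of the Yang–Baxter equation. -/
def IsBraiding (σ : X × X → X × X) : Prop :=
  ∀ p : X × X × X, m12 σ (m23 σ (m12 σ p)) = m23 σ (m12 σ (m23 σ p))

/-- Apply `σ` to the first two entries of a list. -/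
def step (σ : X × X → X × X) : List X → List X
  | x :: y :: l => (σ (x, y)).1 :: (σ (x, y)).2 :: l
  | l => l

/-- The action of the braid generator `b_{i+1}` on words: apply `σ` at
(0-based) position `i`. -/
def applyAt (σ : X × X → X × X) : ℕ → List X → List X
  | 0, l => step σ l
  | _ + 1, [] => []
  | n + 1, x :: l => x :: applyAt σ n l

/-- A word is normal when every pair of consecutive letters is fixed by the
braiding. -/
def IsNormal (σ : X × X → X × X) (l : List X) : Prop :=
  l.Chain' fun x y => σ (x, y) = (x, y)

/-- The defining relations of the structure monoid `M(X, σ)`: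
`x y = y' x'` whenever `σ (x, y) = (y', x')`. -/
inductive StructRel (σ : X × X → X × X) : FreeMonoid X → FreeMonoid X → Prop
  | rel (x y : X) : StructRel σ (FreeMonoid.of x * FreeMonoid.of y)
      (FreeMonoid.of (σ (x, y)).1 * FreeMonoid.of (σ (x, y)).2)

/-- The structure monoid of a braided set. -/
abbrev StructMonoid (σ : X × X → X × X) := (conGen (StructRel σ)).Quotient

/-- The tautological map from words to the structure monoid. -/
def monMk (σ : X × X → X × X) (l : List X) : StructMonoid σ :=
  Con.mk' _ (FreeMonoid.ofList l)

/-- The block `B_j = b_j ⋯ b_2 b_1` acting on words (`b_1` acting first). -/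
def blockB (σ : X × X → X × X) : ℕ → List X → List X
  | 0, l => l
  | j + 1, l => applyAt σ j (blockB σ j l)

/-- The longest element `Δ_{j+1} = B_1 B_2 ⋯ B_j` of the Coxeter monoid acting
on words (the block `B_j` acting first). -/
def delta (σ : X × X → X × X) : ℕ → List X → List X
  | 0, l => l
  | j + 1, l => delta σ j (blockB σ (j + 1) l)

/-!
The longest element `Δ_k` of the `0`-Hecke monoid absorbs every generator on both sides,
`b_i Δ_k = Δ_k = Δ_k b_i`, by induction on `k` along the two factorizations
`Δ_{k+1} = Δ_k (b_k ⋯ b_1) = (b_1 ⋯ b_k) Δ_k`. This only uses the Coxeter relations, which hold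
for the action of an idempotent braiding on words (the braid relation is the Yang–Baxter
equation). Absorption on the left says that `Δ_k w` is normal. Absorption on the right says that
`Δ_k` is constant along the defining relations of `M(X, σ)`; as it is also compatible with
concatenation, the kernel of `w ↦ Δ w` is a congruence containing them, so `Δ` factors through
`M(X, σ)`. Since `Δ` fixes normal words and does not change the class of a word, it inverts the
tautological map.
-/

section Words

variable (σ : X × X → X × X)

theorem applyAt_nil (i : ℕ) : applyAt σ i [] = [] := by
  cases i <;> rfl

theorem length_applyAt (i : ℕ) (l : List X) : (applyAt σ i l).length = l.length := by
  induction i generalizing l with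
  | zero => match l with
    | [] | [_] | _ :: _ :: _ => rfl
  | succ n ih => cases l <;> simp [applyAt, ih]

theorem applyAt_of_length_le (i : ℕ) (l : List X) (h : l.length ≤ i + 1) :
    applyAt σ i l = l := by
  induction i generalizing l with
  | zero => match l, h with
    | [], _ | [_], _ => rfl
  | succ n ih => cases l with
    | nil => rfl
    | cons x t => simp only [applyAt, ih t (by simpa using h)]

theorem applyAt_append_left (i : ℕ) (a c : List X) (h : i + 2 ≤ a.length) :
    applyAt σ i (a ++ c) = applyAt σ i a ++ c := by
  induction i generalizing a with
  | zero => match a, h with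
    | _ :: _ :: _, _ => rfl
  | succ n ih => match a, h with
    | x :: t, h => simp only [List.cons_append, applyAt, ih t (by simpa using h)]

theorem applyAt_append_right (i : ℕ) (a c : List X) :
    applyAt σ (a.length + i) (a ++ c) = a ++ applyAt σ i c := by
  induction a with
  | nil => simp
  | cons x t ih =>
    rw [List.length_cons, Nat.add_right_comm]
    simp only [List.cons_append, applyAt, ih]

theorem isNormal_cons_cons (x y : X) (u : List X) :
    IsNormal σ (x :: y :: u) ↔ σ (x, y) = (x, y) ∧ IsNormal σ (y :: u) :=
  List.isChain_cons_cons

theorem isNormal_iff_forall_applyAt_eq : ∀ l : List X, IsNormal σ l ↔ ∀ i, applyAt σ i l = l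
  | [] => iff_of_true List.isChain_nil (applyAt_nil σ)
  | [x] => iff_of_true (List.isChain_singleton x) fun i => applyAt_of_length_le σ i [x] (by simp)
  | x :: y :: u => by
    rw [isNormal_cons_cons, isNormal_iff_forall_applyAt_eq (y :: u)]
    conv_rhs => rw [← Nat.and_forall_add_one]
    refine and_congr ?_ (forall_congr' fun i => ?_)
    · simp only [applyAt, step, List.cons.injEq, Prod.ext_iff, and_true]
    · simp only [applyAt, List.cons.injEq, true_and]

end Words

section Coxeter

variable {σ : X × X → X × X}

theorem applyAt_idem (hidem : ∀ p, σ (σ p) = σ p) (i : ℕ) (l : List X) :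
    applyAt σ i (applyAt σ i l) = applyAt σ i l := by
  induction i generalizing l with
  | zero => match l with
    | [] | [_] => rfl
    | x :: y :: t => simp only [applyAt, step, Prod.mk.eta, hidem]
  | succ n ih => cases l with
    | nil => rfl
    | cons x t => simp only [applyAt, ih]

variable (σ) in
theorem applyAt_comm (i j : ℕ) (l : List X) (h : i + 2 ≤ j) :
    applyAt σ i (applyAt σ j l) = applyAt σ j (applyAt σ i l) := by
  induction i generalizing j l with
  | zero =>
    obtain ⟨j, rfl⟩ : ∃ j', j = j' + 2 := ⟨j - 2, by omega⟩
    match l with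
    | [] | [_] | _ :: _ :: _ => rfl
  | succ n ih =>
    obtain ⟨j, rfl⟩ : ∃ j', j = j' + 1 := ⟨j - 1, by omega⟩
    cases l with
    | nil => rfl
    | cons x t => simp only [applyAt, ih j t (by omega)]

theorem applyAt_braid (hYB : IsBraiding σ) (hidem : ∀ p, σ (σ p) = σ p) (i : ℕ)
    (l : List X) :
    applyAt σ i (applyAt σ (i + 1) (applyAt σ i l)) =
      applyAt σ (i + 1) (applyAt σ i (applyAt σ (i + 1) l)) := by
  induction i generalizing l with
  | zero => match l with
    | [] | [_] => rfl
    | [x, y] => simp [applyAt, step, hidem]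
    | x :: y :: z :: t =>
      have key := congrArg (fun p : X × X × X => p.1 :: p.2.1 :: p.2.2 :: t) (hYB (x, y, z))
      simpa [m12, m23, applyAt, step] using key
  | succ n ih => cases l with
    | nil => rfl
    | cons x t => simp only [applyAt, ih]

end Coxeter

section Delta

variable {σ : X × X → X × X}

variable (σ) in
theorem applyAt_blockB_comm (n m : ℕ) (l : List X) (h : n < m) :
    applyAt σ m (blockB σ n l) = blockB σ n (applyAt σ m l) := by
  induction n generalizing l with
  | zero => rfl
  | succ j ih => rw [blockB, blockB, ← applyAt_comm σ j m _ (by omega), ih _ (by omega)]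

variable (σ) in
theorem applyAt_delta_comm (n m : ℕ) (l : List X) (h : n < m) :
    applyAt σ m (delta σ n l) = delta σ n (applyAt σ m l) := by
  induction n generalizing l with
  | zero => rfl
  | succ j ih => rw [delta, delta, ih _ (by omega), applyAt_blockB_comm σ _ m _ (by omega)]

theorem blockB_applyAt_succ (hYB : IsBraiding σ) (hidem : ∀ p, σ (σ p) = σ p) (n j : ℕ)
    (l : List X) (h : j < n) :
    blockB σ (n + 1) (applyAt σ (j + 1) l) = applyAt σ j (blockB σ (n + 1) l) := by
  induction n generalizing j l with
  | zero => omega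
  | succ n ih =>
    rcases Nat.lt_or_ge j n with hj | hj
    · rw [blockB, ih j _ hj, ← applyAt_comm σ j (n + 1) _ (by omega)]; rfl
    · obtain rfl : j = n := by omega
      calc blockB σ (j + 2) (applyAt σ (j + 1) l)
          = applyAt σ (j + 1) (applyAt σ j (applyAt σ (j + 1) (blockB σ j l))) := by
            simp only [blockB, applyAt_blockB_comm σ j (j + 1) _ (by omega)]
        _ = applyAt σ j (blockB σ (j + 2) l) := (applyAt_braid hYB hidem j _).symm

theorem blockB_applyAt_zero (hidem : ∀ p, σ (σ p) = σ p) (n : ℕ) (l : List X) :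
    blockB σ (n + 1) (applyAt σ 0 l) = blockB σ (n + 1) l := by
  induction n with
  | zero => exact applyAt_idem hidem 0 l
  | succ n ih => rw [blockB, ih, ← blockB]

theorem delta_applyAt (hYB : IsBraiding σ) (hidem : ∀ p, σ (σ p) = σ p) (n m : ℕ)
    (l : List X) (h : m < n) : delta σ n (applyAt σ m l) = delta σ n l := by
  induction n generalizing m l with
  | zero => omega
  | succ n ih =>
    rw [delta, delta]
    cases m with
    | zero => rw [blockB_applyAt_zero hidem]
    | succ m => rw [blockB_applyAt_succ hYB hidem n m l (by omega), ih m _ (by omega)]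

variable (σ) in
/-- `blockR n = b_1 b_2 ⋯ b_n`, with `b_n` acting first. -/
def blockR : ℕ → List X → List X
  | 0, l => l
  | n + 1, l => blockR n (applyAt σ n l)

variable (σ) in
theorem applyAt_blockR_comm (n m : ℕ) (l : List X) (h : n < m) :
    applyAt σ m (blockR σ n l) = blockR σ n (applyAt σ m l) := by
  induction n generalizing l with
  | zero => rfl
  | succ j ih => rw [blockR, blockR, ih _ (by omega), ← applyAt_comm σ j m _ (by omega)]

theorem applyAt_zero_blockR (hidem : ∀ p, σ (σ p) = σ p) (n : ℕ) (l : List X) :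
    applyAt σ 0 (blockR σ (n + 1) l) = blockR σ (n + 1) l := by
  induction n generalizing l with
  | zero => exact applyAt_idem hidem 0 l
  | succ n ih => rw [blockR, ih]

theorem applyAt_succ_blockR (hYB : IsBraiding σ) (hidem : ∀ p, σ (σ p) = σ p) (n j : ℕ)
    (l : List X) (h : j < n) :
    applyAt σ (j + 1) (blockR σ (n + 1) l) = blockR σ (n + 1) (applyAt σ j l) := by
  induction n generalizing j l with
  | zero => omega
  | succ n ih =>
    rcases Nat.lt_or_ge j n with hj | hj
    · rw [blockR, ih j _ hj, applyAt_comm σ j (n + 1) _ (by omega), ← blockR]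
    · obtain rfl : j = n := by omega
      calc applyAt σ (j + 1) (blockR σ (j + 2) l)
          = blockR σ j (applyAt σ (j + 1) (applyAt σ j (applyAt σ (j + 1) l))) := by
            simp only [blockR, applyAt_blockR_comm σ j (j + 1) _ (by omega)]
        _ = blockR σ (j + 2) (applyAt σ j l) := by
            rw [← applyAt_braid hYB hidem j]; rfl

variable (σ) in
theorem delta_succ_eq_blockR (n : ℕ) (l : List X) :
    delta σ (n + 1) l = blockR σ (n + 1) (delta σ n l) := by
  induction n generalizing l with
  | zero => rfl
  | succ n ih =>
    calc delta σ (n + 2) l = blockR σ (n + 1) (delta σ n (blockB σ (n + 2) l)) := ih _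
      _ = blockR σ (n + 2) (delta σ (n + 1) l) := by
          rw [blockB, ← applyAt_delta_comm σ n (n + 1) _ (by omega)]; rfl

theorem applyAt_delta (hYB : IsBraiding σ) (hidem : ∀ p, σ (σ p) = σ p) (n j : ℕ)
    (l : List X) (h : j < n) : applyAt σ j (delta σ n l) = delta σ n l := by
  induction n generalizing j l with
  | zero => omega
  | succ n ih =>
    rw [delta_succ_eq_blockR]
    cases j with
    | zero => exact applyAt_zero_blockR hidem n _
    | succ j => rw [applyAt_succ_blockR hYB hidem n j _ (by omega), ih j _ (by omega)]

end Delta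

section Action

variable (σ : X × X → X × X)

def braidAction : Submonoid (Function.End (List X)) :=
  Submonoid.closure (Set.range (applyAt σ))

theorem blockB_mem_braidAction (n : ℕ) :
    (blockB σ n : Function.End (List X)) ∈ braidAction σ := by
  induction n with
  | zero => exact one_mem _
  | succ n ih => exact mul_mem (Submonoid.subset_closure ⟨n, rfl⟩) ih

theorem delta_mem_braidAction (n : ℕ) :
    (delta σ n : Function.End (List X)) ∈ braidAction σ := by
  induction n with
  | zero => exact one_mem _
  | succ n ih => exact mul_mem ih (blockB_mem_braidAction σ (n + 1))

variable {σ}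

theorem invariant_of_mem_braidAction {β : Type*} {g : List X → β}
    (hg : ∀ i l, g (applyAt σ i l) = g l) {f : Function.End (List X)} (hf : f ∈ braidAction σ)
    (l : List X) : g (f l) = g l := by
  induction hf using Submonoid.closure_induction generalizing l with
  | mem f hf => obtain ⟨i, rfl⟩ := hf; exact hg i l
  | one => rfl
  | mul f f' _ _ ih ih' => exact (ih _).trans (ih' l)

theorem apply_eq_self_of_mem_braidAction {l : List X} (hl : ∀ i, applyAt σ i l = l)
    {f : Function.End (List X)} (hf : f ∈ braidAction σ) : f l = l := by
  induction hf using Submonoid.closure_induction with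
  | mem f hf => obtain ⟨i, rfl⟩ := hf; exact hl i
  | one => rfl
  | mul f f' _ _ ih ih' => exact (congrArg f ih').trans ih

end Action

section NormalForm

variable (σ : X × X → X × X)

def normalForm (l : List X) : List X := delta σ (l.length - 1) l

theorem length_normalForm (l : List X) : (normalForm σ l).length = l.length :=
  invariant_of_mem_braidAction (length_applyAt σ) (delta_mem_braidAction σ _) l

theorem normalForm_of_isNormal {l : List X} (hl : IsNormal σ l) : normalForm σ l = l :=
  apply_eq_self_of_mem_braidAction (f := delta σ (l.length - 1))
    ((isNormal_iff_forall_applyAt_eq σ l).1 hl) (delta_mem_braidAction σ _)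

variable {σ}

theorem isNormal_normalForm (hYB : IsBraiding σ) (hidem : ∀ p, σ (σ p) = σ p) (l : List X) :
    IsNormal σ (normalForm σ l) := by
  refine (isNormal_iff_forall_applyAt_eq σ _).2 fun i => ?_
  by_cases h : i + 2 ≤ l.length
  · exact applyAt_delta hYB hidem _ i l (by omega)
  · exact applyAt_of_length_le σ i _ (by rw [length_normalForm]; omega)

theorem normalForm_applyAt (hYB : IsBraiding σ) (hidem : ∀ p, σ (σ p) = σ p) (i : ℕ)
    (l : List X) : normalForm σ (applyAt σ i l) = normalForm σ l := by
  by_cases h : i + 2 ≤ l.length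
  · rw [normalForm, normalForm, length_applyAt]
    exact delta_applyAt hYB hidem _ i l (by omega)
  · rw [applyAt_of_length_le σ i l (by omega)]

theorem normalForm_apply_append (hYB : IsBraiding σ) (hidem : ∀ p, σ (σ p) = σ p)
    {f : Function.End (List X)} (hf : f ∈ braidAction σ) (a c : List X) :
    normalForm σ (f a ++ c) = normalForm σ (a ++ c) := by
  refine invariant_of_mem_braidAction (g := fun a => normalForm σ (a ++ c)) (fun i a => ?_) hf a
  by_cases h : i + 2 ≤ a.length
  · rw [← applyAt_append_left σ i a c h, normalForm_applyAt hYB hidem]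
  · rw [applyAt_of_length_le σ i a (by omega)]

theorem normalForm_append_apply (hYB : IsBraiding σ) (hidem : ∀ p, σ (σ p) = σ p)
    {f : Function.End (List X)} (hf : f ∈ braidAction σ) (a c : List X) :
    normalForm σ (a ++ f c) = normalForm σ (a ++ c) :=
  invariant_of_mem_braidAction (g := fun c => normalForm σ (a ++ c))
    (fun i c => by rw [← applyAt_append_right σ i a c, normalForm_applyAt hYB hidem]) hf c

theorem normalForm_normalForm_append (hYB : IsBraiding σ) (hidem : ∀ p, σ (σ p) = σ p)
    (a c : List X) : normalForm σ (normalForm σ a ++ c) = normalForm σ (a ++ c) :=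
  normalForm_apply_append hYB hidem (delta_mem_braidAction σ _) a c

theorem normalForm_append_normalForm (hYB : IsBraiding σ) (hidem : ∀ p, σ (σ p) = σ p)
    (a c : List X) : normalForm σ (a ++ normalForm σ c) = normalForm σ (a ++ c) :=
  normalForm_append_apply hYB hidem (delta_mem_braidAction σ _) a c

def normalFormCon (hYB : IsBraiding σ) (hidem : ∀ p, σ (σ p) = σ p) : Con (FreeMonoid X) where
  r a b := normalForm σ a.toList = normalForm σ b.toList
  iseqv := ⟨fun _ => rfl, Eq.symm, Eq.trans⟩
  mul' {a b c d} hab hcd := by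
    simp only [FreeMonoid.toList_mul]
    calc normalForm σ (a.toList ++ c.toList)
        = normalForm σ (normalForm σ a.toList ++ normalForm σ c.toList) := by
          rw [normalForm_append_normalForm hYB hidem, normalForm_normalForm_append hYB hidem]
      _ = normalForm σ (b.toList ++ d.toList) := by
          rw [hab, hcd, normalForm_append_normalForm hYB hidem,
            normalForm_normalForm_append hYB hidem]

theorem normalForm_eq_of_monMk_eq (hYB : IsBraiding σ) (hidem : ∀ p, σ (σ p) = σ p)
    {a b : List X} (h : monMk σ a = monMk σ b) : normalForm σ a = normalForm σ b := by
  have hle : conGen (StructRel σ) ≤ normalFormCon hYB hidem :=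
    Con.conGen_le.2 fun _ _ ⟨x, y⟩ => (normalForm_applyAt hYB hidem 0 [x, y]).symm
  exact hle ((Con.eq _).1 h)

theorem monMk_cons (x : X) (l : List X) :
    monMk σ (x :: l) = Con.mk' _ (FreeMonoid.of x) * monMk σ l := by
  rw [monMk, FreeMonoid.ofList_cons, map_mul]
  rfl

variable (σ) in
theorem monMk_applyAt (i : ℕ) (l : List X) : monMk σ (applyAt σ i l) = monMk σ l := by
  induction i generalizing l with
  | zero => match l with
    | [] | [_] => rfl
    | x :: y :: u =>
      simp only [applyAt, step, monMk_cons, ← mul_assoc, ← map_mul]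
      exact congrArg (· * _) ((Con.eq _).2 (ConGen.Rel.of _ _ (StructRel.rel x y))).symm
  | succ n ih => cases l with
    | nil => rfl
    | cons x t => simp only [applyAt, monMk_cons, ih]

variable (σ) in
theorem monMk_normalForm (l : List X) : monMk σ (normalForm σ l) = monMk σ l :=
  invariant_of_mem_braidAction (monMk_applyAt σ) (delta_mem_braidAction σ _) l

variable (σ) in
theorem monMk_surjective : Function.Surjective (monMk σ) := fun m => by
  obtain ⟨w, rfl⟩ := Con.mk'_surjective m
  exact ⟨w.toList, congrArg _ w.ofList_toList⟩

end NormalForm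

/-- For an idempotent braided set `(X, σ)`, the tautological map from normal
words to the structure monoid `M(X, σ)` is a bijection; every element of
`M(X, σ)` has a unique normal form, obtained by applying the longest element
`Δ_k = b₁ (b₂b₁) ⋯ (b_{k-1} ⋯ b₂b₁)` of the Coxeter monoid to any
representative word of length `k`. -/
theorem normal_form_idempotent_braiding (σ : X × X → X × X)
    (hYB : IsBraiding σ) (hidem : ∀ p, σ (σ p) = σ p) :
    Function.Bijective (fun l : {l : List X // IsNormal σ l} => monMk σ l.1) ∧
    ∀ l : List X, IsNormal σ (delta σ (l.length - 1) l) ∧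
      monMk σ (delta σ (l.length - 1) l) = monMk σ l := by
  refine ⟨⟨?_, fun m => ?_⟩,
    fun l => ⟨isNormal_normalForm hYB hidem l, monMk_normalForm σ l⟩⟩
  · rintro ⟨a, ha⟩ ⟨b, hb⟩ h
    have hab := normalForm_eq_of_monMk_eq hYB hidem h
    rw [normalForm_of_isNormal σ ha, normalForm_of_isNormal σ hb] at hab
    exact Subtype.ext hab
  · obtain ⟨l, rfl⟩ := monMk_surjective σ m
    exact ⟨⟨normalForm σ l, isNormal_normalForm hYB hidem l⟩, monMk_normalForm σ l⟩
end
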